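/- arXiv:1611.01267 — 3 statements merged into one kernel-verified Lean document; each statement's English description precedes it below -/
import Mathlib

section
/- Let f be a non-constant rational function and suppose there is a value a₁ ∈ ℂ∪{∞} such that there is exactly one point z₁ ∈ ℂ with f(z₁) = a₁. Let U be the union of {a₁} and the set of all values that f, as a function on the complex plane ℂ, omits. Let c₁, …, c_r be the totally ramified values of f not lying in U, and for each j let m_j ≥ 2 be an integer such that every c_j-point of f has multiplicity at least m_j. Then |U| + Σ_{j=1}^{r} (1 − 1/m_j) ≤ 2. -/
open Filter Topology
open scoped Classical

/-- The Riemann sphere `ℂ ∪ {∞}`. -/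
inductive CSphere : Type where
  | finite (z : ℂ) : CSphere
  | infty : CSphere

namespace CSphere

/-- Reciprocal of a complex number, landing on the Riemann sphere (`1/0 = ∞`). -/
noncomputable def sphInv (w : ℂ) : CSphere :=
  if w = 0 then infty else finite w⁻¹

/-- Finite part of a point of the sphere (junk value `0` at `∞`). -/
def finPart : CSphere → ℂ
  | finite w => w
  | infty => 0

/-- Modulus of a point of the sphere (junk value `0` at `∞`). -/
noncomputable def sphAbs : CSphere → ℝ
  | finite w => ‖w‖
  | infty => 0

/-- The chordal (spherical) distance on the Riemann sphere. -/
noncomputable def sphDist : CSphere → CSphere → ℝ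
  | finite z, finite w => 2 * ‖z - w‖ / (Real.sqrt (1 + ‖z‖ ^ 2) * Real.sqrt (1 + ‖w‖ ^ 2))
  | finite z, infty => 2 / Real.sqrt (1 + ‖z‖ ^ 2)
  | infty, finite w => 2 / Real.sqrt (1 + ‖w‖ ^ 2)
  | infty, infty => 0

end CSphere

open CSphere

/-- A sphere-valued function is meromorphic at a point `z` if, in a neighbourhood of `z`,
it is given by an analytic function, or is the reciprocal of an analytic function that is
not identically zero near `z` (so that a pole is an isolated point where the value is `∞`). -/
def MeroAt (f : ℂ → CSphere) (z : ℂ) : Prop :=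
  (∃ g : ℂ → ℂ, AnalyticAt ℂ g z ∧ ∀ᶠ w in 𝓝 z, f w = finite (g w)) ∨
  (∃ g : ℂ → ℂ, AnalyticAt ℂ g z ∧ ¬ (∀ᶠ w in 𝓝 z, g w = 0) ∧
    ∀ᶠ w in 𝓝 z, f w = sphInv (g w))

/-- A sphere-valued function is meromorphic on a set `D` if it is meromorphic
at every point of `D`. -/
def MeroOn (f : ℂ → CSphere) (D : Set ℂ) : Prop := ∀ z ∈ D, MeroAt f z

/-- `f` takes the value `c ∈ ℂ ∪ {∞}` at `z` with multiplicity at least `m`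
(for `c = ∞` this says that `z` is a pole of order at least `m`). -/
def ValueMultAtLeast (f : ℂ → CSphere) (c : CSphere) (m : ℕ) (z : ℂ) : Prop :=
  match c with
  | finite a => ∃ g : ℂ → ℂ, AnalyticAt ℂ g z ∧ (∀ᶠ w in 𝓝 z, f w = finite (g w)) ∧
      ∀ k < m, iteratedDeriv k (fun w => g w - a) z = 0
  | infty => ∃ g : ℂ → ℂ, AnalyticAt ℂ g z ∧ ¬ (∀ᶠ w in 𝓝 z, g w = 0) ∧
      (∀ᶠ w in 𝓝 z, f w = sphInv (g w)) ∧ ∀ k < m, iteratedDeriv k g z = 0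

/-- The derivative of a sphere-valued meromorphic function: near a point with finite value
it is the derivative of the local analytic representative; at a pole (where the function is
not locally representable by an analytic function) the derivative again has a pole. -/
noncomputable def sphDeriv (f : ℂ → CSphere) (z : ℂ) : CSphere :=
  if h : ∃ g : ℂ → ℂ, AnalyticAt ℂ g z ∧ ∀ᶠ w in 𝓝 z, f w = finite (g w) then
    finite (deriv h.choose z)
  else infty

/-- The spherical derivative `f^#(z) = |f′(z)|/(1+|f(z)|²)` of a meromorphic function,
computed at a pole through the local representative of `1/f`. -/
noncomputable def sphericalDerivative (f : ℂ → CSphere) (z : ℂ) : ℝ :=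
  if h : ∃ g : ℂ → ℂ, AnalyticAt ℂ g z ∧ ∀ᶠ w in 𝓝 z, f w = finite (g w) then
    ‖deriv h.choose z‖ / (1 + ‖h.choose z‖ ^ 2)
  else if h' : ∃ g : ℂ → ℂ, AnalyticAt ℂ g z ∧ ∀ᶠ w in 𝓝 z, f w = sphInv (g w) then
    ‖deriv h'.choose z‖ / (1 + ‖h'.choose z‖ ^ 2)
  else 0

/-- A sequence of sphere-valued functions converges to `g` spherically uniformly on
compact subsets of `D`. -/
def SphUnifConvOn (D : Set ℂ) (s : ℕ → ℂ → CSphere) (g : ℂ → CSphere) : Prop :=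
  ∀ K : Set ℂ, K ⊆ D → IsCompact K →
    ∀ ε > 0, ∀ᶠ n in atTop, ∀ z ∈ K, sphDist (s n z) (g z) < ε

/-- A family `F` of sphere-valued (meromorphic) functions is normal on `D`:
every sequence in `F` has a subsequence converging spherically uniformly on
compact subsets of `D`. -/
def NormalOn (F : Set (ℂ → CSphere)) (D : Set ℂ) : Prop :=
  ∀ s : ℕ → ℂ → CSphere, (∀ n, s n ∈ F) →
    ∃ φ : ℕ → ℕ, StrictMono φ ∧ ∃ g : ℂ → CSphere, SphUnifConvOn D (fun n => s (φ n)) g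

/-- A family `F` is normal at a point `z₀` of `D` if it is normal on some
neighbourhood of `z₀` inside `D`. -/
def NormalAt (F : Set (ℂ → CSphere)) (D : Set ℂ) (z₀ : ℂ) : Prop :=
  ∃ U ∈ 𝓝 z₀, U ⊆ D ∧ NormalOn F U

/-- Positive part of the logarithm. -/
noncomputable def posLog (x : ℝ) : ℝ := max (Real.log x) 0

/-- The order of the pole of `f` at `z` (`0` if `z` is not a pole). -/
noncomputable def poleOrd (f : ℂ → CSphere) (z : ℂ) : ℕ :=
  sSup {m : ℕ | ValueMultAtLeast f CSphere.infty m z}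

/-- `n(t,f)`: the number of poles of `f` in the closed disk of radius `t`,
counted with multiplicity. -/
noncomputable def nCount (f : ℂ → CSphere) (t : ℝ) : ℝ :=
  ∑ᶠ z ∈ Metric.closedBall (0 : ℂ) t, (poleOrd f z : ℝ)

/-- The Nevanlinna counting function `N(r,f)`. -/
noncomputable def NevN (f : ℂ → CSphere) (r : ℝ) : ℝ :=
  (∫ t in (0:ℝ)..r, (nCount f t - nCount f 0) / t) + nCount f 0 * Real.log r

/-- The Nevanlinna proximity function `m(r,f)`. -/
noncomputable def NevM (f : ℂ → CSphere) (r : ℝ) : ℝ :=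
  (2 * Real.pi)⁻¹ *
    ∫ θ in (0:ℝ)..(2 * Real.pi), posLog (sphAbs (f ((r : ℂ) * Complex.exp ((θ : ℂ) * Complex.I))))

/-- The Nevanlinna characteristic `T(r,f) = m(r,f) + N(r,f)`. -/
noncomputable def NevT (f : ℂ → CSphere) (r : ℝ) : ℝ := NevM f r + NevN f r

/-- The order `ρ(f) = limsup_{r → ∞} log T(r,f) / log r` of a meromorphic function on `ℂ`. -/
noncomputable def meroOrder (f : ℂ → CSphere) : EReal :=
  Filter.limsup (fun r : ℝ => ((Real.log (NevT f r) / Real.log r : ℝ) : EReal)) Filter.atTop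

/-- `f` is a rational function: it is given everywhere on `ℂ` by a quotient `p/q` of
coprime polynomials, with value `∞` at the zeros of `q`. -/
def IsRationalFn (f : ℂ → CSphere) : Prop :=
  ∃ p q : Polynomial ℂ, q ≠ 0 ∧ IsCoprime p q ∧
    ∀ z : ℂ, f z = if q.eval z = 0 then CSphere.infty
      else CSphere.finite (p.eval z / q.eval z)

/-- The value of the rational function `p/q` at the point `∞` of the Riemann sphere. -/
noncomputable def valueAtInfty (p q : Polynomial ℂ) : CSphere :=
  if q.natDegree < p.natDegree then CSphere.infty
  else if p.natDegree < q.natDegree then CSphere.finite 0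
  else CSphere.finite (p.leadingCoeff / q.leadingCoeff)

/-- The multiplicity (local degree) with which the rational function `p/q` takes the
value `c` at the point `∞` of the Riemann sphere. -/
noncomputable def multAtInfty (p q : Polynomial ℂ) (c : CSphere) : ℕ :=
  match c with
  | CSphere.infty => max p.natDegree q.natDegree - q.natDegree
  | CSphere.finite a => max p.natDegree q.natDegree - (p - Polynomial.C a * q).natDegree

/-- The maximum modulus `M(r,h) = max_{|z| = r} |h z|` of an entire function. -/
noncomputable def maxModulus (h : ℂ → ℂ) (r : ℝ) : ℝ :=
  sSup ((fun z => ‖h z‖) '' Metric.sphere (0 : ℂ) r)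

/-- The order `limsup_{r → ∞} log log M(r,h) / log r` of an entire function. -/
noncomputable def entireOrder (h : ℂ → ℂ) : EReal :=
  Filter.limsup (fun r : ℝ => ((Real.log (Real.log (maxModulus h r)) / Real.log r : ℝ) : EReal))
    Filter.atTop

/-!
Write `f = p / q` with `p, q` coprime and `d = max (deg p) (deg q) ≥ 1`. The finite `c`-points
of `f` are the roots of `P_c = p - c q` (`P_∞ = q`), which has degree `d` for every `c` except
possibly the value of `f` at `∞`. The Wronskian `W` of `(p, q)` is also the Wronskian of `P_c`
and a partner of degree `≤ d`, so a root of multiplicity `μ` of `P_c` is a root of multiplicity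
at least `μ - 1` of `W`, and `deg W < deg P_c + d`. Summing over distinct values `c ∈ S`
(their `c`-points are disjoint) gives `∑_{c ∈ S} (d - #(c-points in ℂ)) ≤ 2d - 1`. For
`S = U ∪ R`, the values in `U` have at most one `c`-point altogether and `c ∈ R` has at most
`d / m_c`, so `d |U| - 1 + d ∑ (1 - 1/m_c) ≤ 2d - 1`.
-/

open Polynomial

namespace Polynomial

theorem rootMultiplicity_sub_one_le_rootMultiplicity_wronskian {R : Type*} [CommRing R]
    {a b : R[X]} (hw : wronskian a b ≠ 0) (t : R) :
    a.rootMultiplicity t - 1 ≤ (wronskian a b).rootMultiplicity t := by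
  have ha : (X - C t) ^ (a.rootMultiplicity t - 1) ∣ a :=
    (pow_dvd_pow _ (Nat.sub_le _ 1)).trans (pow_rootMultiplicity_dvd a t)
  have ha' := pow_sub_one_dvd_derivative_of_pow_dvd (pow_rootMultiplicity_dvd a t)
  exact (le_rootMultiplicity_iff hw).2 <| dvd_sub (ha.mul_right _) (ha'.mul_right _)

theorem sum_rootMultiplicity_le_natDegree {R : Type*} [CommRing R] [IsDomain R]
    (p : R[X]) (s : Finset R) : ∑ t ∈ s, p.rootMultiplicity t ≤ p.natDegree := by
  calc ∑ t ∈ s, p.rootMultiplicity t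
        = ∑ t ∈ s, p.roots.count t := by simp only [count_roots]
    _ ≤ ∑ t ∈ p.roots.toFinset, p.roots.count t :=
      Finset.sum_le_sum_of_ne_zero fun _ _ ht =>
        Multiset.mem_toFinset.2 (Multiset.count_ne_zero.1 ht)
    _ = Multiset.card p.roots := Multiset.toFinset_sum_count_eq _
    _ ≤ p.natDegree := card_roots' p

theorem sum_rootMultiplicity_roots_toFinset {k : Type*} [Field k] [IsAlgClosed k] (p : k[X]) :
    ∑ t ∈ p.roots.toFinset, p.rootMultiplicity t = p.natDegree := by
  simp only [← count_roots, Multiset.toFinset_sum_count_eq, IsAlgClosed.card_roots_eq_natDegree]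

theorem iteratedDeriv_eval {𝕜 : Type*} [NontriviallyNormedField 𝕜] (p : 𝕜[X]) (k : ℕ) :
    iteratedDeriv k (fun x => p.eval x) = fun x => (derivative^[k] p).eval x := by
  induction k with
  | zero => rfl
  | succ k ih =>
    rw [iteratedDeriv_succ, ih]
    funext x
    rw [Function.iterate_succ_apply']
    exact Polynomial.deriv _

theorem le_rootMultiplicity_of_natCast_le_analyticOrderAt {𝕜 : Type*}
    [NontriviallyNormedField 𝕜] [CharZero 𝕜] [CompleteSpace 𝕜] {p : 𝕜[X]} (hp : p ≠ 0)
    {t : 𝕜} {m : ℕ}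
    (h : (m : ℕ∞) ≤ analyticOrderAt (fun x => p.eval x) t) : m ≤ p.rootMultiplicity t := by
  rw [natCast_le_analyticOrderAt_iff_iteratedDeriv_eq_zero
    (AnalyticOnNhd.eval_polynomial p t (Set.mem_univ t))] at h
  simp only [iteratedDeriv_eval] at h
  cases m with
  | zero => exact Nat.zero_le _
  | succ n =>
    exact (lt_rootMultiplicity_iff_isRoot_iterate_derivative hp).2 fun k hk => h k (by omega)

theorem le_rootMultiplicity_of_eval_eventuallyEq_mul {𝕜 : Type*} [NontriviallyNormedField 𝕜]
    [CharZero 𝕜] [CompleteSpace 𝕜] {p : 𝕜[X]} (hp : p ≠ 0) {t : 𝕜} {m : ℕ}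
    {g b : 𝕜 → 𝕜}
    (hg : AnalyticAt 𝕜 g t) (hb : AnalyticAt 𝕜 b t)
    (hpgb : (fun x => p.eval x) =ᶠ[𝓝 t] g * b)
    (hg0 : ∀ k < m, iteratedDeriv k g t = 0) : m ≤ p.rootMultiplicity t := by
  refine le_rootMultiplicity_of_natCast_le_analyticOrderAt hp ?_
  rw [analyticOrderAt_congr hpgb, analyticOrderAt_mul hg hb]
  exact ((natCast_le_analyticOrderAt_iff_iteratedDeriv_eq_zero hg).2 hg0).trans le_self_add

end Polynomial

noncomputable def ratFn (p q : ℂ[X]) (z : ℂ) : CSphere :=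
  if q.eval z = 0 then infty else finite (p.eval z / q.eval z)

def ratDegree (p q : ℂ[X]) : ℕ := max p.natDegree q.natDegree

noncomputable def fiberPoly (p q : ℂ[X]) : CSphere → ℂ[X]
  | finite a => p - C a * q
  | infty => q

/-- `(fiberPoly p q c, cofiberPoly p q c)` is the image of `(p, q)` under a linear map of
determinant `1` (hence the sign at `∞`), so it is again coprime, of the same degree, and has the
same Wronskian. -/
noncomputable def cofiberPoly (p q : ℂ[X]) : CSphere → ℂ[X]
  | finite _ => q
  | infty => -p

noncomputable def fiberFinset (p q : ℂ[X]) (c : CSphere) : Finset ℂ :=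
  (fiberPoly p q c).roots.toFinset

section RationalFunction

variable {p q : ℂ[X]}

theorem wronskian_fiberPoly_cofiberPoly (c : CSphere) :
    wronskian (fiberPoly p q c) (cofiberPoly p q c) = wronskian p q := by
  cases c with
  | finite a =>
    simp only [fiberPoly, cofiberPoly, wronskian, derivative_sub, derivative_mul, derivative_C]
    ring
  | infty => simp only [fiberPoly, cofiberPoly, wronskian_neg_right, wronskian_neg_eq]

theorem isCoprime_fiberPoly_cofiberPoly (hco : IsCoprime p q) (c : CSphere) :
    IsCoprime (fiberPoly p q c) (cofiberPoly p q c) := by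
  cases c with
  | finite a => simpa [fiberPoly, cofiberPoly, sub_eq_add_neg, ← neg_mul] using
      hco.add_mul_right_left (-C a)
  | infty => exact hco.symm.neg_right

theorem max_natDegree_fiberPoly_cofiberPoly (c : CSphere) :
    max (fiberPoly p q c).natDegree (cofiberPoly p q c).natDegree = ratDegree p q := by
  cases c with
  | finite a =>
    have h₁ := natDegree_sub_le p (C a * q)
    have h₂ := natDegree_add_le (p - C a * q) (C a * q)
    have h₃ := natDegree_C_mul_le a q
    simp only [sub_add_cancel] at h₂
    simp only [fiberPoly, cofiberPoly, ratDegree]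
    omega
  | infty => simp only [fiberPoly, cofiberPoly, ratDegree, natDegree_neg, max_comm]

theorem natDegree_fiberPoly_le (c : CSphere) : (fiberPoly p q c).natDegree ≤ ratDegree p q :=
  max_natDegree_fiberPoly_cofiberPoly c ▸ le_max_left _ _

theorem natDegree_cofiberPoly_le (c : CSphere) : (cofiberPoly p q c).natDegree ≤ ratDegree p q :=
  max_natDegree_fiberPoly_cofiberPoly c ▸ le_max_right _ _

theorem fiberPoly_ne_zero (hco : IsCoprime p q) (hd : 0 < ratDegree p q) (c : CSphere) :
    fiberPoly p q c ≠ 0 := by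
  intro h
  have hunit := (isCoprime_fiberPoly_cofiberPoly hco c).isUnit_of_dvd' (h ▸ dvd_zero _) dvd_rfl
  have := max_natDegree_fiberPoly_cofiberPoly (p := p) (q := q) c
  rw [h, natDegree_zero, natDegree_eq_zero_of_isUnit hunit] at this
  omega

theorem wronskian_ne_zero_of_isCoprime (hco : IsCoprime p q) (hd : 0 < ratDegree p q) :
    wronskian p q ≠ 0 := by
  intro h
  obtain ⟨hp, hq⟩ := hco.wronskian_eq_zero_iff.1 h
  simp only [ratDegree, derivative_eq_zero.1 hp, derivative_eq_zero.1 hq] at hd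
  omega

theorem natDegree_wronskian_lt (hco : IsCoprime p q) (hd : 0 < ratDegree p q) (c : CSphere) :
    (wronskian p q).natDegree < (fiberPoly p q c).natDegree + ratDegree p q := by
  have h := natDegree_wronskian_lt_add
    ((wronskian_fiberPoly_cofiberPoly c).symm ▸ wronskian_ne_zero_of_isCoprime hco hd)
  rw [wronskian_fiberPoly_cofiberPoly] at h
  have := natDegree_cofiberPoly_le (p := p) (q := q) c
  omega

theorem coeff_ratDegree_ne_zero (hd : 0 < ratDegree p q) :
    p.coeff (ratDegree p q) ≠ 0 ∨ q.coeff (ratDegree p q) ≠ 0 := by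
  rcases max_choice p.natDegree q.natDegree with h | h <;> rw [ratDegree, h] at hd ⊢
  · exact .inl (leadingCoeff_ne_zero.2 (ne_zero_of_natDegree_gt hd))
  · exact .inr (leadingCoeff_ne_zero.2 (ne_zero_of_natDegree_gt hd))

/-- The only value whose fibre polynomial can have lower degree is the value of `p / q` at `∞`. -/
theorem natDegree_fiberPoly_eq_or_eq (hd : 0 < ratDegree p q) {c c' : CSphere}
    (hne : c ≠ c') :
    (fiberPoly p q c).natDegree = ratDegree p q ∨
      (fiberPoly p q c').natDegree = ratDegree p q := by
  by_contra! h
  have hc := coeff_eq_zero_of_natDegree_lt ((natDegree_fiberPoly_le c).lt_of_ne h.1)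
  have hc' := coeff_eq_zero_of_natDegree_lt ((natDegree_fiberPoly_le c').lt_of_ne h.2)
  suffices q.coeff (ratDegree p q) = 0 ∧ p.coeff (ratDegree p q) = 0 by
    rcases coeff_ratDegree_ne_zero hd with h' | h' <;> simp_all
  cases c with
  | finite a => cases c' with
    | finite b =>
      simp only [fiberPoly, coeff_sub, coeff_C_mul, sub_eq_zero] at hc hc'
      have hab : a - b ≠ 0 := sub_ne_zero.2 fun h => hne (h ▸ rfl)
      have hq : q.coeff (ratDegree p q) = 0 := by
        have : (a - b) * q.coeff (ratDegree p q) = 0 := by linear_combination hc' - hc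
        simpa [hab] using this
      simp_all
    | infty => simp_all [fiberPoly]
  | infty => cases c' with
    | finite b => simp_all [fiberPoly]
    | infty => exact absurd rfl hne

theorem exists_forall_ne_natDegree_fiberPoly_eq (hd : 0 < ratDegree p q) :
    ∃ c₀, ∀ c ≠ c₀, (fiberPoly p q c).natDegree = ratDegree p q := by
  by_cases h : ∃ c₀, (fiberPoly p q c₀).natDegree ≠ ratDegree p q
  · obtain ⟨c₀, hc₀⟩ := h
    exact ⟨c₀, fun c hc => ((natDegree_fiberPoly_eq_or_eq hd hc).resolve_right hc₀)⟩
  · push Not at h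
    exact ⟨infty, fun c _ => h c⟩

theorem eval_fiberPoly_eq_zero_iff (hco : IsCoprime p q) (c : CSphere) (z : ℂ) :
    (fiberPoly p q c).eval z = 0 ↔ ratFn p q z = c := by
  by_cases hqz : q.eval z = 0
  · have hpz : p.eval z ≠ 0 := fun hpz => by
      obtain ⟨u, v, huv⟩ := hco
      simpa [hpz, hqz] using congrArg (eval z) huv
    cases c <;> simp [fiberPoly, ratFn, hqz, hpz]
  · cases c <;> simp [fiberPoly, ratFn, hqz, sub_eq_zero, div_eq_iff hqz]

theorem mem_fiberFinset (hco : IsCoprime p q) (hd : 0 < ratDegree p q) {c : CSphere} {z : ℂ} :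
    z ∈ fiberFinset p q c ↔ ratFn p q z = c := by
  rw [fiberFinset, Multiset.mem_toFinset, mem_roots (fiberPoly_ne_zero hco hd c), IsRoot,
    eval_fiberPoly_eq_zero_iff hco]

theorem le_rootMultiplicity_fiberPoly (hco : IsCoprime p q) (hd : 0 < ratDegree p q)
    {c : CSphere} {m : ℕ} {z : ℂ} (hv : ValueMultAtLeast (ratFn p q) c m z) :
    m ≤ (fiberPoly p q c).rootMultiplicity z := by
  cases c with
  | finite a =>
    obtain ⟨g, hg, hfg, hg0⟩ := hv
    refine le_rootMultiplicity_of_eval_eventuallyEq_mul (fiberPoly_ne_zero hco hd _)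
      (hg.sub analyticAt_const) (AnalyticOnNhd.eval_polynomial q z trivial) ?_ hg0
    filter_upwards [hfg] with w hw
    unfold ratFn at hw
    split_ifs at hw with hqw
    simp only [fiberPoly, eval_sub, eval_mul, eval_C, Pi.mul_apply, Pi.sub_apply,
      ← finite.inj hw]
    field_simp
  | infty =>
    obtain ⟨g, hg, -, hfg, hg0⟩ := hv
    refine le_rootMultiplicity_of_eval_eventuallyEq_mul (fiberPoly_ne_zero hco hd _)
      hg (AnalyticOnNhd.eval_polynomial p z trivial) ?_ hg0
    filter_upwards [hfg] with w hw
    unfold ratFn sphInv at hw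
    split_ifs at hw with hqw hgw
    · simp [fiberPoly, hqw, hgw]
    · have h := finite.inj hw
      field_simp at h
      simp only [fiberPoly, Pi.mul_apply, ← h, mul_comm]

theorem pairwiseDisjoint_fiberFinset (hco : IsCoprime p q) (hd : 0 < ratDegree p q)
    (S : Set CSphere) : S.PairwiseDisjoint (fiberFinset p q) :=
  fun _ _ _ _ hne => Finset.disjoint_left.2 fun _ hz hz' =>
    hne (((mem_fiberFinset hco hd).1 hz).symm.trans ((mem_fiberFinset hco hd).1 hz'))

theorem sum_natDegree_fiberPoly_le (hco : IsCoprime p q) (hd : 0 < ratDegree p q)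
    (S : Finset CSphere) :
    ∑ c ∈ S, (fiberPoly p q c).natDegree
      ≤ (wronskian p q).natDegree + ∑ c ∈ S, (fiberFinset p q c).card := by
  have hroot (c : CSphere) (z : ℂ) :
      (fiberPoly p q c).rootMultiplicity z ≤ (wronskian p q).rootMultiplicity z + 1 := by
    have := rootMultiplicity_sub_one_le_rootMultiplicity_wronskian
      ((wronskian_fiberPoly_cofiberPoly c).symm ▸ wronskian_ne_zero_of_isCoprime hco hd) z
    rw [wronskian_fiberPoly_cofiberPoly] at this
    omega
  calc ∑ c ∈ S, (fiberPoly p q c).natDegree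
      = ∑ c ∈ S, ∑ z ∈ fiberFinset p q c, (fiberPoly p q c).rootMultiplicity z := by
        simp only [fiberFinset, sum_rootMultiplicity_roots_toFinset]
    _ ≤ ∑ c ∈ S, ∑ z ∈ fiberFinset p q c, ((wronskian p q).rootMultiplicity z + 1) := by
        gcongr with c _ z _
        exact hroot c z
    _ = ∑ z ∈ S.biUnion (fiberFinset p q), (wronskian p q).rootMultiplicity z
          + ∑ c ∈ S, (fiberFinset p q c).card := by
        rw [Finset.sum_biUnion (pairwiseDisjoint_fiberFinset hco hd S)]
        simp only [Finset.sum_add_distrib, Finset.card_eq_sum_ones]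
    _ ≤ (wronskian p q).natDegree + ∑ c ∈ S, (fiberFinset p q c).card := by
        gcongr
        exact sum_rootMultiplicity_le_natDegree _ _

theorem ratDegree_mul_card_lt (hco : IsCoprime p q) (hd : 0 < ratDegree p q)
    (S : Finset CSphere) :
    ratDegree p q * S.card < 2 * ratDegree p q + ∑ c ∈ S, (fiberFinset p q c).card := by
  obtain ⟨c₀, hc₀⟩ := exists_forall_ne_natDegree_fiberPoly_eq hd
  have hdeficit : ∑ c ∈ S, (ratDegree p q - (fiberPoly p q c).natDegree)
      ≤ ratDegree p q - (fiberPoly p q c₀).natDegree :=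
    calc _ ≤ ∑ c ∈ insert c₀ S, (ratDegree p q - (fiberPoly p q c).natDegree) :=
          Finset.sum_le_sum_of_subset (Finset.subset_insert _ _)
      _ = _ := Finset.sum_eq_single_of_mem _ (Finset.mem_insert_self _ _) fun c _ hc => by
          rw [hc₀ c hc, Nat.sub_self]
  have hsplit : ratDegree p q * S.card = ∑ c ∈ S, (fiberPoly p q c).natDegree
      + ∑ c ∈ S, (ratDegree p q - (fiberPoly p q c).natDegree) := by
    rw [← Finset.sum_add_distrib, mul_comm, ← smul_eq_mul, ← Finset.sum_const]
    exact Finset.sum_congr rfl fun c _ => (Nat.add_sub_cancel' (natDegree_fiberPoly_le c)).symm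
  have := sum_natDegree_fiberPoly_le hco hd S
  have := natDegree_wronskian_lt hco hd c₀
  have := natDegree_fiberPoly_le (p := p) (q := q) c₀
  omega

theorem ratDegree_pos (hnc : ¬ ∃ c : CSphere, ∀ z : ℂ, ratFn p q z = c) :
    0 < ratDegree p q := by
  by_contra! h
  apply hnc
  rw [eq_C_of_natDegree_eq_zero (p := p) (by simp [ratDegree] at h; omega),
    eq_C_of_natDegree_eq_zero (p := q) (by simp [ratDegree] at h; omega)]
  exact ⟨ratFn (C (p.coeff 0)) (C (q.coeff 0)) 0, fun z => by simp [ratFn]⟩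

theorem mul_card_fiberFinset_le (hco : IsCoprime p q) (hd : 0 < ratDegree p q) {c : CSphere}
    {m : ℕ} (hv : ∀ z, ratFn p q z = c → ValueMultAtLeast (ratFn p q) c m z) :
    m * (fiberFinset p q c).card ≤ ratDegree p q :=
  calc m * (fiberFinset p q c).card
      ≤ ∑ z ∈ fiberFinset p q c, (fiberPoly p q c).rootMultiplicity z := by
        rw [mul_comm, ← smul_eq_mul]
        exact Finset.card_nsmul_le_sum _ _ _ fun z hz =>
          le_rootMultiplicity_fiberPoly hco hd (hv z ((mem_fiberFinset hco hd).1 hz))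
    _ ≤ (fiberPoly p q c).natDegree := sum_rootMultiplicity_le_natDegree _ _
    _ ≤ ratDegree p q := natDegree_fiberPoly_le c

end RationalFunction

theorem card_add_sum_one_sub_inv_le_two {ι : Type*} {d n : ℕ} (hd : 0 < d) {R : Finset ι}
    {m k : ι → ℕ} (hm : ∀ c ∈ R, 0 < m c) (hmk : ∀ c ∈ R, m c * k c ≤ d)
    (h : d * (n + R.card) ≤ 2 * d + ∑ c ∈ R, k c) :
    (n : ℝ) + ∑ c ∈ R, (1 - 1 / (m c : ℝ)) ≤ 2 := by
  have hterm (c : ι) (hc : c ∈ R) : (d : ℝ) * (1 - 1 / m c) ≤ d - k c := by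
    have hmc : (0 : ℝ) < m c := by exact_mod_cast hm c hc
    have hk : (k c : ℝ) ≤ d / m c := by
      rw [le_div_iff₀ hmc, mul_comm]
      exact_mod_cast hmk c hc
    rw [mul_one_sub, mul_one_div]
    linarith
  have h' : (d : ℝ) * (n + R.card) ≤ 2 * d + ∑ c ∈ R, (k c : ℝ) := by exact_mod_cast h
  refine le_of_mul_le_mul_left ?_ (Nat.cast_pos.2 hd : (0 : ℝ) < d)
  calc (d : ℝ) * (n + ∑ c ∈ R, (1 - 1 / (m c : ℝ)))
      = d * n + ∑ c ∈ R, d * (1 - 1 / (m c : ℝ)) := by rw [mul_add, Finset.mul_sum]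
    _ ≤ d * n + ∑ c ∈ R, ((d : ℝ) - k c) := by gcongr with c hc; exact hterm c hc
    _ ≤ d * 2 := by
        rw [Finset.sum_sub_distrib, Finset.sum_const, nsmul_eq_mul]
        linarith

theorem defect_relation_rational_general (f : ℂ → CSphere) (hf : IsRationalFn f)
    (hnc : ¬ ∃ c : CSphere, ∀ z : ℂ, f z = c)
    (a₁ : CSphere) (ha₁ : ∃! z : ℂ, f z = a₁)
    (U R : Finset CSphere) (m : CSphere → ℕ)
    (hU : ∀ u ∈ U, u = a₁ ∨ ∀ z : ℂ, f z ≠ u)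
    (hRU : ∀ c ∈ R, c ∉ U)
    (hram : ∀ c ∈ R, 2 ≤ m c ∧ ∀ z : ℂ, f z = c → ValueMultAtLeast f c (m c) z) :
    (U.card : ℝ) + ∑ c ∈ R, (1 - 1 / (m c : ℝ)) ≤ 2 := by
  obtain ⟨p, q, -, hco, hpq⟩ := hf
  obtain rfl : f = ratFn p q := funext hpq
  have hd := ratDegree_pos hnc
  obtain ⟨z₁, -, hz₁⟩ := ha₁
  have hU1 : ∑ u ∈ U, (fiberFinset p q u).card ≤ 1 := by
    have hsub : ∀ z ∈ U.biUnion (fiberFinset p q), z = z₁ := by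
      simp only [Finset.mem_biUnion, mem_fiberFinset hco hd]
      rintro z ⟨u, hu, rfl⟩
      exact hz₁ z ((hU _ hu).resolve_right fun h => h z rfl)
    rw [← Finset.card_biUnion (pairwiseDisjoint_fiberFinset hco hd U)]
    exact Finset.card_le_one.2 fun z hz z' hz' => (hsub z hz).trans (hsub z' hz').symm
  have hUR : Disjoint U R := Finset.disjoint_left.2 fun c hcU hcR => hRU c hcR hcU
  have hcount := ratDegree_mul_card_lt hco hd (U ∪ R)
  rw [Finset.card_union_of_disjoint hUR, Finset.sum_union hUR] at hcount
  exact card_add_sum_one_sub_inv_le_two hd (fun c hc => by have := (hram c hc).1; omega)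
    (fun c hc => mul_card_fiberFinset_le hco hd (hram c hc).2) (by omega)

/-- Let `f` be a non-constant rational function taking some value `a₁ ∈ ℂ ∪ {∞}` at
exactly one point of `ℂ`. Let `U` consist of `a₁` together with values omitted by `f`
on `ℂ`, and let `R` consist of totally ramified values of `f` not in `U`, every
`c ∈ R`-point having multiplicity at least `m c ≥ 2`. Then
`|U| + ∑_{c ∈ R} (1 − 1/(m c)) ≤ 2`. -/
theorem defect_relation_rational (f : ℂ → CSphere) (hf : IsRationalFn f)
    (hnc : ¬ ∃ c : CSphere, ∀ z : ℂ, f z = c)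
    (a₁ : CSphere) (ha₁ : ∃! z : ℂ, f z = a₁)
    (U R : Finset CSphere) (m : CSphere → ℕ)
    (ha₁U : a₁ ∈ U)
    (hU : ∀ u ∈ U, u = a₁ ∨ ∀ z : ℂ, f z ≠ u)
    (hRU : ∀ c ∈ R, c ∉ U)
    (hram : ∀ c ∈ R, 2 ≤ m c ∧ ∀ z : ℂ, f z = c → ValueMultAtLeast f c (m c) z) :
    (U.card : ℝ) + ∑ c ∈ R, (1 - 1 / (m c : ℝ)) ≤ 2 :=
  defect_relation_rational_general f hf hnc a₁ ha₁ U R m hU hRU hram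
end

section
/- Let h(z) = (sin(e^z) − 1)/(sin(e^z) + 1). Then h is a meromorphic function on ℂ that omits the value 1, every zero of h is multiple (has multiplicity at least 2), and every pole of h is multiple (has multiplicity at least 2). -/
open Filter Topology
open scoped Classical

open CSphere

/-! Put `S = sin ∘ exp`, so that `h = (S - 1)/(S + 1)`. Then `h = 1` is impossible, the zeros of
`h` are the points where `S = 1` and its poles the points where `S = -1`. At all of these
`sin² (eᶻ) = 1`, hence `cos (eᶻ) = 0` and `S' = cos (eᶻ) · eᶻ` vanishes: `S ∓ 1` has a multiple
zero there, and so do `h` and `1/h`. -/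

theorem iteratedDeriv_eq_zero_of_lt_two {𝕜 F : Type*} [NontriviallyNormedField 𝕜]
    [NormedAddCommGroup F] [NormedSpace 𝕜 F] {f : 𝕜 → F} {x : 𝕜} (h₀ : f x = 0)
    (h₁ : deriv f x = 0) : ∀ k < 2, iteratedDeriv k f x = 0 := by
  intro k hk
  interval_cases k
  · rwa [iteratedDeriv_zero]
  · rwa [iteratedDeriv_one]

theorem Differentiable.not_eventually_eq_of_ne {E : Type*} [NormedAddCommGroup E]
    [NormedSpace ℂ E] [CompleteSpace E] {f : ℂ → E} (hf : Differentiable ℂ f) {z₀ : ℂ} {c : E}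
    (h₀ : f z₀ ≠ c) (z : ℂ) : ¬ ∀ᶠ w in 𝓝 z, f w = c := fun hev =>
  h₀ <| AnalyticOnNhd.eqOn_of_preconnected_of_eventuallyEq (fun w _ => hf.analyticAt w)
    analyticOnNhd_const isPreconnected_univ (Set.mem_univ z) hev (Set.mem_univ z₀)

section MoebiusComp

open Complex

variable {S : ℂ → ℂ} {z : ℂ}

noncomputable def moebiusComp (S : ℂ → ℂ) : ℂ → CSphere :=
  fun z => if S z + 1 = 0 then infty else finite ((S z - 1) / (S z + 1))

theorem moebiusComp_ne_one (S : ℂ → ℂ) (z : ℂ) : moebiusComp S z ≠ finite 1 := by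
  unfold moebiusComp
  split_ifs with hz
  · exact nofun
  · intro heq
    have h := (div_eq_one_iff_eq hz).mp (CSphere.finite.inj heq)
    have : (-1 : ℂ) = 1 := by linear_combination h
    norm_num at this

theorem moebiusComp_eq_zero_iff : moebiusComp S z = finite 0 ↔ S z = 1 := by
  unfold moebiusComp
  split_ifs with hz
  · refine ⟨nofun, fun h => ?_⟩
    norm_num [h] at hz
  · rw [finite.injEq, div_eq_zero_iff, sub_eq_zero, or_iff_left hz]

theorem moebiusComp_eq_infty_iff : moebiusComp S z = infty ↔ S z = -1 := by
  unfold moebiusComp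
  split_ifs with hz
  · simpa [eq_neg_iff_add_eq_zero] using hz
  · simpa [eq_neg_iff_add_eq_zero] using hz

theorem moebiusComp_eventuallyEq_finite (hS : ContinuousAt S z) (hz : S z + 1 ≠ 0) :
    ∀ᶠ w in 𝓝 z, moebiusComp S w = finite ((S w - 1) / (S w + 1)) := by
  have hc : ContinuousAt (fun w => S w + 1) z := hS.add continuousAt_const
  filter_upwards [hc.eventually_ne hz] with w hw
  rw [moebiusComp, if_neg hw]

theorem moebiusComp_eventuallyEq_sphInv (hS : ContinuousAt S z) (hz : S z = -1) :
    ∀ᶠ w in 𝓝 z, moebiusComp S w = sphInv ((S w + 1) / (S w - 1)) := by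
  have hz' : S z - 1 ≠ 0 := by rw [hz]; norm_num
  have hc : ContinuousAt (fun w => S w - 1) z := hS.sub continuousAt_const
  filter_upwards [hc.eventually_ne hz'] with w hw
  unfold moebiusComp sphInv
  by_cases hw' : S w + 1 = 0
  · simp [hw']
  · rw [if_neg hw', if_neg (div_ne_zero hw' hw), inv_div]

theorem moebiusComp_pole_repr (hS : AnalyticAt ℂ S z) (hS₁ : ¬ ∀ᶠ w in 𝓝 z, S w = -1)
    (hz : S z = -1) :
    AnalyticAt ℂ (fun w => (S w + 1) / (S w - 1)) z ∧
    ¬ (∀ᶠ w in 𝓝 z, (S w + 1) / (S w - 1) = 0) ∧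
    ∀ᶠ w in 𝓝 z, moebiusComp S w = sphInv ((S w + 1) / (S w - 1)) := by
  have hz' : S z - 1 ≠ 0 := by rw [hz]; norm_num
  have hc : ContinuousAt (fun w => S w - 1) z := hS.continuousAt.sub continuousAt_const
  refine ⟨(hS.add analyticAt_const).div (hS.sub analyticAt_const) hz', fun hev => hS₁ ?_,
    moebiusComp_eventuallyEq_sphInv hS.continuousAt hz⟩
  filter_upwards [hev, hc.eventually_ne hz'] with w hw hw'
  exact eq_neg_of_add_eq_zero_left ((div_eq_zero_iff.mp hw).resolve_right hw')

theorem meroAt_moebiusComp (hS : AnalyticAt ℂ S z) (hS₁ : ¬ ∀ᶠ w in 𝓝 z, S w = -1) :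
    MeroAt (moebiusComp S) z := by
  by_cases hz : S z = -1
  · exact Or.inr ⟨_, moebiusComp_pole_repr hS hS₁ hz⟩
  · have hz' : S z + 1 ≠ 0 := fun h => hz (eq_neg_of_add_eq_zero_left h)
    exact Or.inl ⟨_, (hS.sub analyticAt_const).div (hS.add analyticAt_const) hz',
      moebiusComp_eventuallyEq_finite hS.continuousAt hz'⟩

theorem valueMultAtLeast_moebiusComp_zero (hS : AnalyticAt ℂ S z) (hz : S z = 1)
    (hd : deriv S z = 0) : ValueMultAtLeast (moebiusComp S) (finite 0) 2 z := by
  have hz' : S z + 1 ≠ 0 := by rw [hz]; norm_num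
  have hφ : DifferentiableAt ℂ (fun s : ℂ => (s - 1) / (s + 1)) (S z) :=
    (differentiableAt_id.sub_const 1).div (differentiableAt_id.add_const 1) hz'
  refine ⟨fun w => (S w - 1) / (S w + 1), (hS.sub analyticAt_const).div
    (hS.add analyticAt_const) hz', moebiusComp_eventuallyEq_finite hS.continuousAt hz', ?_⟩
  simp only [sub_zero]
  refine iteratedDeriv_eq_zero_of_lt_two (by simp [hz]) ?_
  exact (deriv_comp z hφ hS.differentiableAt).trans (by rw [hd, mul_zero])

theorem valueMultAtLeast_moebiusComp_infty (hS : AnalyticAt ℂ S z)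
    (hS₁ : ¬ ∀ᶠ w in 𝓝 z, S w = -1) (hz : S z = -1) (hd : deriv S z = 0) :
    ValueMultAtLeast (moebiusComp S) infty 2 z := by
  have hz' : S z - 1 ≠ 0 := by rw [hz]; norm_num
  have hφ : DifferentiableAt ℂ (fun s : ℂ => (s + 1) / (s - 1)) (S z) :=
    (differentiableAt_id.add_const 1).div (differentiableAt_id.sub_const 1) hz'
  obtain ⟨hg, hg₀, hev⟩ := moebiusComp_pole_repr hS hS₁ hz
  refine ⟨_, hg, hg₀, hev, iteratedDeriv_eq_zero_of_lt_two (by simp [hz]) ?_⟩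
  exact (deriv_comp z hφ hS.differentiableAt).trans (by rw [hd, mul_zero])

end MoebiusComp

section SinExp

open Complex

variable {z : ℂ}

theorem deriv_sin_exp_eq_zero (hz : sin (exp z) ^ 2 = 1) :
    deriv (fun w => sin (exp w)) z = 0 := by
  have hcos : cos (exp z) = 0 :=
    pow_eq_zero_iff two_ne_zero |>.mp (by linear_combination sin_sq_add_cos_sq (exp z) - hz)
  refine ((hasDerivAt_sin _).comp z (hasDerivAt_exp z)).deriv.trans ?_
  rw [hcos, zero_mul]

theorem sin_exp_log_pi_div_two : sin (exp (log (Real.pi / 2))) = 1 := by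
  rw [exp_log (by exact_mod_cast Real.pi_div_two_pos.ne'), sin_pi_div_two]

end SinExp

/-- The function `h(z) = (sin(eᶻ) − 1)/(sin(eᶻ) + 1)` is meromorphic on `ℂ`, omits the
value `1`, and all its zeros and poles are multiple. -/
theorem sin_exp_moebius_example (h : ℂ → CSphere)
    (hh : ∀ z : ℂ, h z = if Complex.sin (Complex.exp z) + 1 = 0 then CSphere.infty
      else CSphere.finite
        ((Complex.sin (Complex.exp z) - 1) / (Complex.sin (Complex.exp z) + 1))) :
    MeroOn h Set.univ ∧
    (∀ z : ℂ, h z ≠ CSphere.finite 1) ∧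
    (∀ z : ℂ, h z = CSphere.finite 0 → ValueMultAtLeast h (CSphere.finite 0) 2 z) ∧
    (∀ z : ℂ, h z = CSphere.infty → ValueMultAtLeast h CSphere.infty 2 z) := by
  obtain rfl : h = moebiusComp fun w => Complex.sin (Complex.exp w) := funext hh
  have hS : Differentiable ℂ fun w => Complex.sin (Complex.exp w) := by fun_prop
  have hS₁ : ∀ z, ¬ ∀ᶠ w in 𝓝 z, Complex.sin (Complex.exp w) = -1 :=
    hS.not_eventually_eq_of_ne (by rw [sin_exp_log_pi_div_two]; norm_num)
  refine ⟨fun z _ => meroAt_moebiusComp (hS.analyticAt z) (hS₁ z), moebiusComp_ne_one _,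
    fun z hz => ?_, fun z hz => ?_⟩
  · rw [moebiusComp_eq_zero_iff] at hz
    exact valueMultAtLeast_moebiusComp_zero (hS.analyticAt z) hz
      (deriv_sin_exp_eq_zero (by rw [hz]; norm_num))
  · rw [moebiusComp_eq_infty_iff] at hz
    exact valueMultAtLeast_moebiusComp_infty (hS.analyticAt z) (hS₁ z) hz
      (deriv_sin_exp_eq_zero (by rw [hz]; norm_num))
end

section
/- For each integer n ≥ 2 let f_n(z) = ((n+1)/(2n))·e^{nz} + ((n−1)/(2n))·e^{−nz}. Then for every n ≥ 2 and every z ∈ ℂ the identity n²(f_n(z)² − 1) = (f_n′(z))² − 1 holds; consequently f_n and f_n′ share the set S = {1, −1} on the unit disk, i.e., f_n(z) ∈ S if and only if f_n′(z) ∈ S. Moreover, the analytic family F = {f_n : n = 2, 3, 4, …} is not normal at 0. -/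
open Filter Topology
open scoped Classical

open CSphere

/-!
Writing `fₙ = a e^{nz} + b e^{-nz}`, one has `fₙ' = n(a e^{nz} - b e^{-nz})`, so
`n²(fₙ² - 1) - (fₙ'² - 1) = 4abn² - n² + 1`, which vanishes for the chosen coefficients; hence
`fₙ² = 1 ↔ fₙ'² = 1`. All `fₙ` equal `1` at the origin, while `fₙ(t) → ∞` for every real `t > 0`.
A locally uniform spherical limit would therefore be `∞` at points `t > 0` arbitrarily close to `0`;
but a single `fₙ` uniformly close to the limit stays near `1` at such points by continuity.
-/

open Complex

noncomputable def expCombo (a b c z : ℂ) : ℂ := a * exp (c * z) + b * exp (-(c * z))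

lemma hasDerivAt_expCombo (a b c z : ℂ) :
    HasDerivAt (expCombo a b c) (c * expCombo a (-b) c z) z := by
  have h₁ : HasDerivAt (fun w => exp (c * w)) (exp (c * z) * c) z := by
    simpa using ((hasDerivAt_id z).const_mul c).cexp
  have h₂ : HasDerivAt (fun w => exp (-(c * w))) (exp (-(c * z)) * -c) z := by
    simpa using ((hasDerivAt_id z).const_mul c).neg.cexp
  exact ((h₁.const_mul a).add (h₂.const_mul b)).congr_deriv (by simp only [expCombo]; ring)

lemma continuous_expCombo (a b c : ℂ) : Continuous (expCombo a b c) := by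
  unfold expCombo
  fun_prop

lemma expCombo_zero (a b c : ℂ) : expCombo a b c 0 = a + b := by
  simp [expCombo]

lemma expCombo_sq_identity {a b c : ℂ} (h : 4 * a * b * c ^ 2 = c ^ 2 - 1) (z : ℂ) :
    c ^ 2 * (expCombo a b c z ^ 2 - 1) = (c * expCombo a (-b) c z) ^ 2 - 1 := by
  have hexp : exp (c * z) * exp (-(c * z)) = 1 := by rw [← exp_add, add_neg_cancel, exp_zero]
  simp only [expCombo]
  linear_combination h + 4 * a * b * c ^ 2 * hexp

lemma mem_one_neg_one_iff_sq_eq_one {R : Type*} [Ring R] [NoZeroDivisors R] (x : R) :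
    x ∈ ({1, -1} : Set R) ↔ x ^ 2 = 1 := by
  rw [sq, mul_self_eq_one_iff]
  rfl

lemma mem_one_neg_one_iff_of_sq_identity {K : Type*} [Field K] {c x y : K} (hc : c ≠ 0)
    (h : c ^ 2 * (x ^ 2 - 1) = y ^ 2 - 1) :
    x ∈ ({1, -1} : Set K) ↔ y ∈ ({1, -1} : Set K) := by
  rw [mem_one_neg_one_iff_sq_eq_one, mem_one_neg_one_iff_sq_eq_one, ← sub_eq_zero,
    ← sub_eq_zero (a := y ^ 2), ← h, mul_eq_zero, or_iff_right (pow_ne_zero 2 hc)]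

noncomputable def expFamily (n : ℕ) : ℂ → ℂ :=
  expCombo (((n : ℂ) + 1) / (2 * n)) (((n : ℂ) - 1) / (2 * n)) n

lemma expFamily_coeff_identity {n : ℕ} (hn : n ≠ 0) :
    4 * (((n : ℂ) + 1) / (2 * n)) * (((n : ℂ) - 1) / (2 * n)) * (n : ℂ) ^ 2 = (n : ℂ) ^ 2 - 1 := by
  field_simp
  ring

lemma expFamily_zero {n : ℕ} (hn : n ≠ 0) : expFamily n 0 = 1 := by
  rw [expFamily, expCombo_zero]
  field_simp
  ring

lemma exp_div_two_le_norm_expFamily {n : ℕ} (hn : n ≠ 0) (t : ℝ) :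
    Real.exp (n * t) / 2 ≤ ‖expFamily n t‖ := by
  have hn1 : (1 : ℝ) ≤ n := Nat.one_le_cast.2 (Nat.one_le_iff_ne_zero.2 hn)
  have hreal : expFamily n t = (((n + 1) / (2 * n) * Real.exp (n * t) +
      (n - 1) / (2 * n) * Real.exp (-(n * t)) : ℝ) : ℂ) := by
    simp only [expFamily, expCombo]
    push_cast
    ring_nf
  have ha : 1 / 2 ≤ ((n : ℝ) + 1) / (2 * n) := by
    rw [div_le_div_iff₀ two_pos (by positivity)]
    linarith
  have hb : 0 ≤ ((n : ℝ) - 1) / (2 * n) * Real.exp (-(n * t)) := by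
    have : 0 ≤ (n : ℝ) - 1 := by linarith
    positivity
  rw [hreal, norm_real, Real.norm_eq_abs]
  calc Real.exp (n * t) / 2 = 1 / 2 * Real.exp (n * t) := by ring
    _ ≤ ((n : ℝ) + 1) / (2 * n) * Real.exp (n * t) := by gcongr
    _ ≤ _ := by linarith
    _ ≤ _ := le_abs_self _

lemma tendsto_norm_expFamily_atTop {t : ℝ} (ht : 0 < t) :
    Tendsto (fun n => ‖expFamily n t‖) atTop atTop := by
  have hexp : Tendsto (fun n : ℕ => Real.exp (n * t) / 2) atTop atTop :=
    (Real.tendsto_exp_atTop.comp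
      (tendsto_natCast_atTop_atTop.atTop_mul_const ht)).atTop_div_const two_pos
  refine tendsto_atTop_mono' atTop ?_ hexp
  filter_upwards [eventually_ne_atTop 0] with n hn
  exact exp_div_two_le_norm_expFamily hn t

lemma zero_mem_closure_escape_expFamily {ψ : ℕ → ℕ} (hψ : Tendsto ψ atTop atTop) {ρ : ℝ}
    (hρ : 0 < ρ) :
    (0 : ℂ) ∈ closure {t ∈ Metric.closedBall (0 : ℂ) ρ |
      Tendsto (fun n => ‖expFamily (ψ n) t‖) atTop atTop} := by
  have h0 : (0 : ℝ) ∈ closure (Set.Ioc 0 ρ) := by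
    rw [closure_Ioc hρ.ne]
    exact Set.left_mem_Icc.2 hρ.le
  have hray : Set.MapsTo ((↑) : ℝ → ℂ) (Set.Ioc 0 ρ) {t ∈ Metric.closedBall (0 : ℂ) ρ |
      Tendsto (fun n => ‖expFamily (ψ n) t‖) atTop atTop} := fun t ht => by
    refine ⟨?_, (tendsto_norm_expFamily_atTop ht.1).comp hψ⟩
    rw [Metric.mem_closedBall, dist_zero_right, norm_real, Real.norm_of_nonneg ht.1.le]
    exact ht.2
  simpa using map_mem_closure continuous_ofReal h0 hray

lemma sqrt_one_add_sq_le {x : ℝ} (hx : 0 ≤ x) : √(1 + x ^ 2) ≤ 1 + x :=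
  (Real.sqrt_le_left (by positivity)).2 (by nlinarith)

lemma two_div_one_add_norm_le_sphDist_infty (w : ℂ) :
    2 / (1 + ‖w‖) ≤ sphDist (finite w) infty :=
  div_le_div_of_nonneg_left zero_le_two (by positivity) (sqrt_one_add_sq_le (norm_nonneg w))

lemma inv_sqrt_le_sphDist_of_le_norm {w c : ℂ} (hw : 2 * ‖c‖ + 1 ≤ ‖w‖) :
    1 / √(1 + ‖c‖ ^ 2) ≤ sphDist (finite w) (finite c) := by
  have hc : 0 < √(1 + ‖c‖ ^ 2) := by positivity
  have hw' : 0 < √(1 + ‖w‖ ^ 2) := by positivity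
  have hsub : 1 + ‖w‖ ≤ 2 * ‖w - c‖ := by linarith [norm_sub_norm_le w c]
  simp only [sphDist]
  rw [div_le_div_iff₀ hc (mul_pos hw' hc)]
  nlinarith [sqrt_one_add_sq_le (norm_nonneg w)]

lemma eq_infty_of_tendsto_norm_atTop {w : ℕ → ℂ} (hw : Tendsto (fun n => ‖w n‖) atTop atTop)
    {c : CSphere} (hc : ∀ ε > 0, ∀ᶠ n in atTop, sphDist (finite (w n)) c < ε) : c = infty := by
  cases c with
  | infty => rfl
  | finite c =>
    obtain ⟨n, hclose, hfar⟩ := ((hc (1 / √(1 + ‖c‖ ^ 2)) (by positivity)).and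
      (hw.eventually_ge_atTop (2 * ‖c‖ + 1))).exists
    exact absurd hclose (inv_sqrt_le_sphDist_of_le_norm hfar).not_gt

namespace SphUnifConvOn

variable {D : Set ℂ} {s : ℕ → ℂ → CSphere} {g : ℂ → CSphere}

lemma mono {D' : Set ℂ} (h : SphUnifConvOn D s g) (hD' : D' ⊆ D) : SphUnifConvOn D' s g :=
  fun K hK => h K (hK.trans hD')

lemma eventually_sphDist_lt (h : SphUnifConvOn D s g) {z : ℂ} (hz : z ∈ D) :
    ∀ ε > 0, ∀ᶠ n in atTop, sphDist (s n z) (g z) < ε := fun ε hε =>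
  (h {z} (Set.singleton_subset_iff.2 hz) isCompact_singleton ε hε).mono
    fun _ hn => hn z rfl

end SphUnifConvOn

lemma not_sphUnifConvOn_of_escape {K : Set ℂ} (hK : IsCompact K) {h : ℕ → ℂ → ℂ} {z₀ : ℂ}
    (hcont : ∀ n, ContinuousAt (h n) z₀) (hz₀ : ∀ n, ‖h n z₀‖ ≤ 1)
    (hesc : z₀ ∈ closure {t ∈ K | Tendsto (fun n => ‖h n t‖) atTop atTop})
    (g : ℂ → CSphere) : ¬ SphUnifConvOn K (fun n z => finite (h n z)) g := by
  intro hconv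
  obtain ⟨m, hm⟩ := (hconv K subset_rfl hK (2 / 3) (by norm_num)).exists
  have hnear : ∀ᶠ t in 𝓝 z₀, ‖h m t‖ < 2 :=
    (hcont m).norm.eventually (gt_mem_nhds (by linarith [hz₀ m]))
  obtain ⟨t, hnear_t : ‖h m t‖ < 2, htK, hesc_t⟩ := mem_closure_iff_nhds.1 hesc _ hnear
  have hgt : g t = infty := eq_infty_of_tendsto_norm_atTop hesc_t (hconv.eventually_sphDist_lt htK)
  have hclose := hm t htK
  rw [hgt] at hclose
  have hfar : 2 / 3 < 2 / (1 + ‖h m t‖) := by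
    gcongr
    linarith
  linarith [two_div_one_add_norm_le_sphDist_infty (h m t)]

/-- For `fₙ(z) = ((n+1)/(2n)) eⁿᶻ + ((n−1)/(2n)) e⁻ⁿᶻ` (`n ≥ 2`) one has
`n²(fₙ² − 1) = (fₙ′)² − 1`; consequently `fₙ` and `fₙ′` share the set `S = {1, −1}` on
the unit disk; yet the analytic family `F = {fₙ : n ≥ 2}` is not normal at `0`. -/
theorem shared_set_not_normal_example (f : ℕ → ℂ → ℂ)
    (hf : ∀ n : ℕ, ∀ z : ℂ, f n z =
      (((n : ℂ) + 1) / (2 * (n : ℂ))) * Complex.exp ((n : ℂ) * z) +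
      (((n : ℂ) - 1) / (2 * (n : ℂ))) * Complex.exp (-((n : ℂ) * z))) :
    (∀ n : ℕ, 2 ≤ n → ∀ z : ℂ,
      (n : ℂ) ^ 2 * ((f n z) ^ 2 - 1) = (deriv (f n) z) ^ 2 - 1) ∧
    (∀ n : ℕ, 2 ≤ n → ∀ z ∈ Metric.ball (0 : ℂ) 1,
      (f n z ∈ ({1, -1} : Set ℂ) ↔ deriv (f n) z ∈ ({1, -1} : Set ℂ))) ∧
    ¬ NormalAt {g : ℂ → CSphere | ∃ n : ℕ, 2 ≤ n ∧ g = fun z => CSphere.finite (f n z)}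
      (Metric.ball (0 : ℂ) 1) 0 := by
  have hfn : f = expFamily := funext fun n => funext (hf n)
  subst hfn
  have hid : ∀ n : ℕ, 2 ≤ n → ∀ z : ℂ,
      (n : ℂ) ^ 2 * (expFamily n z ^ 2 - 1) = deriv (expFamily n) z ^ 2 - 1 := fun n hn z => by
    rw [expFamily, (hasDerivAt_expCombo _ _ _ z).deriv]
    exact expCombo_sq_identity (expFamily_coeff_identity (by omega)) z
  refine ⟨hid, fun n hn z _ => mem_one_neg_one_iff_of_sq_identity (by norm_cast; omega)
    (hid n hn z), ?_⟩
  rintro ⟨U, hU, -, hnormal⟩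
  obtain ⟨ρ, hρ, hball⟩ := Metric.mem_nhds_iff.1 hU
  obtain ⟨φ, hφ, g, hconv⟩ := hnormal (fun n z => finite (expFamily (n + 2) z))
    fun n => ⟨n + 2, by omega, rfl⟩
  have hKU : Metric.closedBall (0 : ℂ) (ρ / 2) ⊆ U :=
    (Metric.closedBall_subset_ball (by linarith)).trans hball
  refine not_sphUnifConvOn_of_escape (h := fun n => expFamily (φ n + 2))
    (isCompact_closedBall 0 (ρ / 2)) (fun n => (continuous_expCombo _ _ _).continuousAt)
    (fun n => by rw [expFamily_zero (by omega), norm_one])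
    (zero_mem_closure_escape_expFamily ?_ (by linarith)) g (hconv.mono hKU)
  exact (tendsto_add_atTop_nat 2).comp hφ.tendsto_atTop
end
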